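/- arXiv:0904.1099 — 5 statements merged into one kernel-verified Lean document; each statement's English description precedes it below -/
import Mathlib

section
/- In an Ann-category 𝒜, for every object A there exist unique isomorphisms L̂^A : A ⊗ 0 → 0 and R̂^A : 0 ⊗ A → 0 such that for all X: (2.1) g_{A⊗X} ∘ (L̂^A ⊕ id_{A⊗X}) ∘ 𝔏_{A,0,X} = id_A ⊗ g_X; (2.1') d_{A⊗X} ∘ (id_{A⊗X} ⊕ L̂^A) ∘ 𝔏_{A,X,0} = id_A ⊗ d_X; (2.2) g_{X⊗A} ∘ (R̂^A ⊕ id_{X⊗A}) ∘ ℜ_{0,X,A} = g_X ⊗ id_A; (2.2') d_{X⊗A} ∘ (id_{X⊗A} ⊕ R̂^A) ∘ ℜ_{X,0,A} = d_X ⊗ id_A. (These are axioms K17 and K18 of a ring category.) -/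
open CategoryTheory

universe v u

/-- An Ann-category: a groupoid with a symmetric monoidal (Picard) structure `⊕`
(`add`, constraints `aPlus`, `csym`, unit `zero` with `gl`, `dr`), a monoidal
structure `⊗` (`mul`, constraint `aMul`, unit `one` with `lu`, `ru`), and
distributivity isomorphisms `distL` (𝔏) and `distR` (ℜ) satisfying (Ann-1),
(Ann-2) and (Ann-3). -/
structure AnnCat (C : Type u) [Groupoid.{v} C] where
  add : C → C → C
  addHom : ∀ {X₁ Y₁ X₂ Y₂ : C}, (X₁ ⟶ Y₁) → (X₂ ⟶ Y₂) → (add X₁ X₂ ⟶ add Y₁ Y₂)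
  addHom_id : ∀ (X Y : C), addHom (𝟙 X) (𝟙 Y) = 𝟙 (add X Y)
  addHom_comp : ∀ {X₁ Y₁ Z₁ X₂ Y₂ Z₂ : C} (f₁ : X₁ ⟶ Y₁) (g₁ : Y₁ ⟶ Z₁)
    (f₂ : X₂ ⟶ Y₂) (g₂ : Y₂ ⟶ Z₂),
    addHom (f₁ ≫ g₁) (f₂ ≫ g₂) = addHom f₁ f₂ ≫ addHom g₁ g₂
  zero : C
  aPlus : ∀ (X Y Z : C), add X (add Y Z) ≅ add (add X Y) Z
  aPlus_natural : ∀ {X X' Y Y' Z Z' : C} (f : X ⟶ X') (g : Y ⟶ Y') (h : Z ⟶ Z'),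
    addHom f (addHom g h) ≫ (aPlus X' Y' Z').hom
      = (aPlus X Y Z).hom ≫ addHom (addHom f g) h
  csym : ∀ (X Y : C), add X Y ≅ add Y X
  csym_natural : ∀ {X X' Y Y' : C} (f : X ⟶ X') (g : Y ⟶ Y'),
    addHom f g ≫ (csym X' Y').hom = (csym X Y).hom ≫ addHom g f
  csym_symm : ∀ (X Y : C), (csym X Y).hom ≫ (csym Y X).hom = 𝟙 (add X Y)
  gl : ∀ (X : C), add zero X ≅ X
  gl_natural : ∀ {X Y : C} (f : X ⟶ Y), addHom (𝟙 zero) f ≫ (gl Y).hom = (gl X).hom ≫ f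
  dr : ∀ (X : C), add X zero ≅ X
  dr_natural : ∀ {X Y : C} (f : X ⟶ Y), addHom f (𝟙 zero) ≫ (dr Y).hom = (dr X).hom ≫ f
  add_pentagon : ∀ (W X Y Z : C),
    addHom (𝟙 W) (aPlus X Y Z).hom ≫ (aPlus W (add X Y) Z).hom
        ≫ addHom (aPlus W X Y).hom (𝟙 Z)
      = (aPlus W X (add Y Z)).hom ≫ (aPlus (add W X) Y Z).hom
  add_triangle : ∀ (X Y : C),
    (aPlus X zero Y).hom ≫ addHom (dr X).hom (𝟙 Y) = addHom (𝟙 X) (gl Y).hom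
  add_hexagon : ∀ (X Y Z : C),
    (aPlus X Y Z).hom ≫ (csym (add X Y) Z).hom ≫ (aPlus Z X Y).hom
      = addHom (𝟙 X) (csym Y Z).hom ≫ (aPlus X Z Y).hom ≫ addHom (csym X Z).hom (𝟙 Y)
  add_inv : ∀ X : C, ∃ X' : C, Nonempty (add X X' ≅ zero)
  mul : C → C → C
  mulHom : ∀ {X₁ Y₁ X₂ Y₂ : C}, (X₁ ⟶ Y₁) → (X₂ ⟶ Y₂) → (mul X₁ X₂ ⟶ mul Y₁ Y₂)
  mulHom_id : ∀ (X Y : C), mulHom (𝟙 X) (𝟙 Y) = 𝟙 (mul X Y)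
  mulHom_comp : ∀ {X₁ Y₁ Z₁ X₂ Y₂ Z₂ : C} (f₁ : X₁ ⟶ Y₁) (g₁ : Y₁ ⟶ Z₁)
    (f₂ : X₂ ⟶ Y₂) (g₂ : Y₂ ⟶ Z₂),
    mulHom (f₁ ≫ g₁) (f₂ ≫ g₂) = mulHom f₁ f₂ ≫ mulHom g₁ g₂
  one : C
  aMul : ∀ (X Y Z : C), mul X (mul Y Z) ≅ mul (mul X Y) Z
  aMul_natural : ∀ {X X' Y Y' Z Z' : C} (f : X ⟶ X') (g : Y ⟶ Y') (h : Z ⟶ Z'),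
    mulHom f (mulHom g h) ≫ (aMul X' Y' Z').hom
      = (aMul X Y Z).hom ≫ mulHom (mulHom f g) h
  lu : ∀ (X : C), mul one X ≅ X
  lu_natural : ∀ {X Y : C} (f : X ⟶ Y), mulHom (𝟙 one) f ≫ (lu Y).hom = (lu X).hom ≫ f
  ru : ∀ (X : C), mul X one ≅ X
  ru_natural : ∀ {X Y : C} (f : X ⟶ Y), mulHom f (𝟙 one) ≫ (ru Y).hom = (ru X).hom ≫ f
  mul_pentagon : ∀ (W X Y Z : C),
    mulHom (𝟙 W) (aMul X Y Z).hom ≫ (aMul W (mul X Y) Z).hom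
        ≫ mulHom (aMul W X Y).hom (𝟙 Z)
      = (aMul W X (mul Y Z)).hom ≫ (aMul (mul W X) Y Z).hom
  mul_triangle : ∀ (X Y : C),
    (aMul X one Y).hom ≫ mulHom (ru X).hom (𝟙 Y) = mulHom (𝟙 X) (lu Y).hom
  distL : ∀ (A X Y : C), mul A (add X Y) ≅ add (mul A X) (mul A Y)
  distL_natural : ∀ {A A' X X' Y Y' : C} (f : A ⟶ A') (u : X ⟶ X') (w : Y ⟶ Y'),
    mulHom f (addHom u w) ≫ (distL A' X' Y').hom
      = (distL A X Y).hom ≫ addHom (mulHom f u) (mulHom f w)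
  distR : ∀ (X Y A : C), mul (add X Y) A ≅ add (mul X A) (mul Y A)
  distR_natural : ∀ {X X' Y Y' A A' : C} (u : X ⟶ X') (w : Y ⟶ Y') (f : A ⟶ A'),
    mulHom (addHom u w) f ≫ (distR X' Y' A').hom
      = (distR X Y A).hom ≫ addHom (mulHom u f) (mulHom w f)
  -- (Ann-1): (A ⊗ −, 𝔏) and (− ⊗ A, ℜ) are ⊕-functors compatible with a⁺ and c
  distL_aPlus : ∀ (A X Y Z : C),
    mulHom (𝟙 A) (aPlus X Y Z).hom ≫ (distL A (add X Y) Z).hom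
        ≫ addHom (distL A X Y).hom (𝟙 (mul A Z))
      = (distL A X (add Y Z)).hom ≫ addHom (𝟙 (mul A X)) (distL A Y Z).hom
        ≫ (aPlus (mul A X) (mul A Y) (mul A Z)).hom
  distL_csym : ∀ (A X Y : C),
    mulHom (𝟙 A) (csym X Y).hom ≫ (distL A Y X).hom
      = (distL A X Y).hom ≫ (csym (mul A X) (mul A Y)).hom
  distR_aPlus : ∀ (X Y Z A : C),
    mulHom (aPlus X Y Z).hom (𝟙 A) ≫ (distR (add X Y) Z A).hom
        ≫ addHom (distR X Y A).hom (𝟙 (mul Z A))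
      = (distR X (add Y Z) A).hom ≫ addHom (𝟙 (mul X A)) (distR Y Z A).hom
        ≫ (aPlus (mul X A) (mul Y A) (mul Z A)).hom
  distR_csym : ∀ (X Y A : C),
    mulHom (csym X Y).hom (𝟙 A) ≫ (distR Y X A).hom
      = (distR X Y A).hom ≫ (csym (mul X A) (mul Y A)).hom
  -- (Ann-2)
  ann11 : ∀ (A B X Y : C),
    mulHom (𝟙 A) (distL B X Y).hom ≫ (distL A (mul B X) (mul B Y)).hom
        ≫ addHom (aMul A B X).hom (aMul A B Y).hom
      = (aMul A B (add X Y)).hom ≫ (distL (mul A B) X Y).hom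
  ann11' : ∀ (X Y B A : C),
    (aMul (add X Y) B A).hom ≫ mulHom (distR X Y B).hom (𝟙 A)
        ≫ (distR (mul X B) (mul Y B) A).hom
      = (distR X Y (mul B A)).hom ≫ addHom (aMul X B A).hom (aMul Y B A).hom
  ann12 : ∀ (A X Y B : C),
    (aMul A (add X Y) B).hom ≫ mulHom (distL A X Y).hom (𝟙 B)
        ≫ (distR (mul A X) (mul A Y) B).hom
      = mulHom (𝟙 A) (distR X Y B).hom ≫ (distL A (mul X B) (mul Y B)).hom
        ≫ addHom (aMul A X B).hom (aMul A Y B).hom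
  ann13 : ∀ (A B X Y : C),
    (distL (add A B) X Y).hom ≫ addHom (distR A B X).hom (distR A B Y).hom
        ≫ ((aPlus (add (mul A X) (mul B X)) (mul A Y) (mul B Y)).hom
          ≫ addHom (aPlus (mul A X) (mul B X) (mul A Y)).inv (𝟙 (mul B Y))
          ≫ addHom (addHom (𝟙 (mul A X)) (csym (mul B X) (mul A Y)).hom) (𝟙 (mul B Y))
          ≫ addHom (aPlus (mul A X) (mul A Y) (mul B X)).hom (𝟙 (mul B Y))
          ≫ (aPlus (add (mul A X) (mul A Y)) (mul B X) (mul B Y)).inv)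
      = (distR A B (add X Y)).hom ≫ addHom (distL A X Y).hom (distL B X Y).hom
  -- (Ann-3)
  ann3l : ∀ (X Y : C),
    (distL one X Y).hom ≫ addHom (lu X).hom (lu Y).hom = (lu (add X Y)).hom
  ann3r : ∀ (X Y : C),
    (distR X Y one).hom ≫ addHom (ru X).hom (ru Y).hom = (ru (add X Y)).hom

namespace AnnCat

variable {C : Type u} [Groupoid.{v} C] (S : AnnCat C)

/-- The defining property of `L̂^A : A ⊗ 0 → 0`:
`g_{A⊗X} ∘ (L̂^A ⊕ id_{A⊗X}) ∘ 𝔏_{A,0,X} = id_A ⊗ g_X` for all `X`. -/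
def IsLhat (A : C) (f : S.mul A S.zero ⟶ S.zero) : Prop :=
  ∀ X : C, (S.distL A S.zero X).hom ≫ S.addHom f (𝟙 (S.mul A X)) ≫ (S.gl (S.mul A X)).hom
    = S.mulHom (𝟙 A) (S.gl X).hom

/-- The defining property of `R̂^A : 0 ⊗ A → 0`:
`g_{X⊗A} ∘ (R̂^A ⊕ id_{X⊗A}) ∘ ℜ_{0,X,A} = g_X ⊗ id_A` for all `X`. -/
def IsRhat (A : C) (f : S.mul S.zero A ⟶ S.zero) : Prop :=
  ∀ X : C, (S.distR S.zero X A).hom ≫ S.addHom f (𝟙 (S.mul X A)) ≫ (S.gl (S.mul X A)).hom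
    = S.mulHom (S.gl X).hom (𝟙 A)

end AnnCat

namespace AnnCat

variable {C : Type u} [Groupoid.{v} C] (S : AnnCat C)

/-! ### Elementary bifunctor lemmas -/

lemma addHom_comp_l {U V W Z : C} (f : U ⟶ V) (g : V ⟶ W) :
    S.addHom (f ≫ g) (𝟙 Z) = S.addHom f (𝟙 Z) ≫ S.addHom g (𝟙 Z) := by
  rw [← S.addHom_comp, Category.comp_id]

lemma addHom_comp_r {U V W Z : C} (f : U ⟶ V) (g : V ⟶ W) :
    S.addHom (𝟙 Z) (f ≫ g) = S.addHom (𝟙 Z) f ≫ S.addHom (𝟙 Z) g := by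
  rw [← S.addHom_comp, Category.comp_id]

lemma mulHom_comp_l {U V W Z : C} (f : U ⟶ V) (g : V ⟶ W) :
    S.mulHom (f ≫ g) (𝟙 Z) = S.mulHom f (𝟙 Z) ≫ S.mulHom g (𝟙 Z) := by
  rw [← S.mulHom_comp, Category.comp_id]

lemma mulHom_comp_r {U V W Z : C} (f : U ⟶ V) (g : V ⟶ W) :
    S.mulHom (𝟙 Z) (f ≫ g) = S.mulHom (𝟙 Z) f ≫ S.mulHom (𝟙 Z) g := by
  rw [← S.mulHom_comp, Category.comp_id]

lemma addHom_exch {U V U' V' : C} (f : U ⟶ V) (g : U' ⟶ V') :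
    S.addHom f (𝟙 U') ≫ S.addHom (𝟙 V) g = S.addHom (𝟙 U) g ≫ S.addHom f (𝟙 V') := by
  rw [← S.addHom_comp, ← S.addHom_comp, Category.comp_id, Category.id_comp,
    Category.comp_id, Category.id_comp]

/-! ### Cancellation of the zero summand via unit constraints -/

lemma cancel_addR_zero {X Y : C} {f g : X ⟶ Y}
    (h : S.addHom f (𝟙 S.zero) = S.addHom g (𝟙 S.zero)) : f = g := by
  have h1 := S.dr_natural f
  have h2 := S.dr_natural g
  rw [h, h2] at h1
  exact ((cancel_epi (S.dr X).hom).mp h1).symm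

lemma cancel_addL_zero {X Y : C} {f g : X ⟶ Y}
    (h : S.addHom (𝟙 S.zero) f = S.addHom (𝟙 S.zero) g) : f = g := by
  have h1 := S.gl_natural f
  have h2 := S.gl_natural g
  rw [h, h2] at h1
  exact ((cancel_epi (S.gl X).hom).mp h1).symm

/-! ### The functor `− ⊕ Z` is fully faithful (Picard property) -/

private lemma retr_eq {Z Z' U V : C} (e : S.add Z Z' ≅ S.zero) (k : U ⟶ V) :
    (S.dr U).inv ≫ S.addHom (𝟙 U) e.inv ≫ (S.aPlus U Z Z').hom
      ≫ S.addHom (S.addHom k (𝟙 Z)) (𝟙 Z') ≫ (S.aPlus V Z Z').inv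
      ≫ S.addHom (𝟙 V) e.hom ≫ (S.dr V).hom = k := by
  have hn := S.aPlus_natural k (𝟙 Z) (𝟙 Z')
  rw [S.addHom_id] at hn
  rw [← reassoc_of% hn]
  rw [Iso.hom_inv_id_assoc]
  have m : S.addHom (𝟙 U) e.inv ≫ S.addHom k (𝟙 (S.add Z Z')) ≫ S.addHom (𝟙 V) e.hom
      = S.addHom k (𝟙 S.zero) := by
    rw [← S.addHom_comp, ← S.addHom_comp, Category.id_comp, Category.comp_id,
      Category.id_comp, e.inv_hom_id]
  rw [reassoc_of% m, S.dr_natural k, Iso.inv_hom_id_assoc]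

lemma addRight_cancel {Z U V : C} {f g : U ⟶ V}
    (h : S.addHom f (𝟙 Z) = S.addHom g (𝟙 Z)) : f = g := by
  obtain ⟨Z', ⟨e⟩⟩ := S.add_inv Z
  rw [← S.retr_eq e f, h, S.retr_eq e g]

lemma addLeft_cancel {Z U V : C} {f g : U ⟶ V}
    (h : S.addHom (𝟙 Z) f = S.addHom (𝟙 Z) g) : f = g := by
  apply S.addRight_cancel (Z := Z)
  have n1 := S.csym_natural (𝟙 Z) f
  have n2 := S.csym_natural (𝟙 Z) g
  rw [h, n2] at n1
  exact ((cancel_epi (S.csym Z U).hom).mp n1).symm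

lemma addRight_full {Z U V : C} (h : S.add U Z ⟶ S.add V Z) :
    ∃ f : U ⟶ V, S.addHom f (𝟙 Z) = h := by
  obtain ⟨Z', ⟨e⟩⟩ := S.add_inv Z
  set G : (S.add U Z ⟶ S.add V Z) → (U ⟶ V) := fun k =>
    (S.dr U).inv ≫ S.addHom (𝟙 U) e.inv ≫ (S.aPlus U Z Z').hom
      ≫ S.addHom k (𝟙 Z') ≫ (S.aPlus V Z Z').inv
      ≫ S.addHom (𝟙 V) e.hom ≫ (S.dr V).hom with hG
  have GF : ∀ k : U ⟶ V, G (S.addHom k (𝟙 Z)) = k := fun k => S.retr_eq e k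
  have Ginj : Function.Injective G := by
    intro k₁ k₂ hk
    simp only [hG] at hk
    rw [cancel_epi, cancel_epi, cancel_epi] at hk
    simp only [← Category.assoc] at hk
    rw [cancel_mono, cancel_mono, cancel_mono] at hk
    exact S.addRight_cancel hk
  exact ⟨G h, Ginj (GF (G h))⟩

/-! ### Kelly coherence lemmas for the additive structure -/

lemma gl_add (X Y : C) :
    (S.aPlus S.zero X Y).hom ≫ S.addHom (S.gl X).hom (𝟙 Y) = (S.gl (S.add X Y)).hom := by
  apply S.addLeft_cancel (Z := S.zero)
  apply (cancel_mono (S.aPlus S.zero X Y).hom).mp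
  have tri1 := S.add_triangle S.zero X
  have tri2 := S.add_triangle S.zero (S.add X Y)
  have pent := S.add_pentagon S.zero S.zero X Y
  have n1 := S.aPlus_natural (𝟙 S.zero) (S.gl X).hom (𝟙 Y)
  have n2 := S.aPlus_natural (S.dr S.zero).hom (𝟙 X) (𝟙 Y)
  rw [S.addHom_id] at n2
  calc S.addHom (𝟙 S.zero) ((S.aPlus S.zero X Y).hom ≫ S.addHom (S.gl X).hom (𝟙 Y))
        ≫ (S.aPlus S.zero X Y).hom
      = S.addHom (𝟙 S.zero) (S.aPlus S.zero X Y).hom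
          ≫ S.addHom (𝟙 S.zero) (S.addHom (S.gl X).hom (𝟙 Y))
          ≫ (S.aPlus S.zero X Y).hom := by
        rw [S.addHom_comp_r]; simp only [Category.assoc]
    _ = S.addHom (𝟙 S.zero) (S.aPlus S.zero X Y).hom
          ≫ (S.aPlus S.zero (S.add S.zero X) Y).hom
          ≫ S.addHom (S.addHom (𝟙 S.zero) (S.gl X).hom) (𝟙 Y) := by rw [n1]
    _ = S.addHom (𝟙 S.zero) (S.aPlus S.zero X Y).hom
          ≫ (S.aPlus S.zero (S.add S.zero X) Y).hom
          ≫ S.addHom (S.aPlus S.zero S.zero X).hom (𝟙 Y)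
          ≫ S.addHom (S.addHom (S.dr S.zero).hom (𝟙 X)) (𝟙 Y) := by
        rw [← tri1, S.addHom_comp_l]
    _ = (S.aPlus S.zero S.zero (S.add X Y)).hom
          ≫ (S.aPlus (S.add S.zero S.zero) X Y).hom
          ≫ S.addHom (S.addHom (S.dr S.zero).hom (𝟙 X)) (𝟙 Y) := by
        rw [reassoc_of% pent]
    _ = (S.aPlus S.zero S.zero (S.add X Y)).hom
          ≫ S.addHom (S.dr S.zero).hom (𝟙 (S.add X Y))
          ≫ (S.aPlus S.zero X Y).hom := by rw [← n2]
    _ = S.addHom (𝟙 S.zero) (S.gl (S.add X Y)).hom ≫ (S.aPlus S.zero X Y).hom := by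
        rw [← reassoc_of% tri2]

lemma dr_add (X Y : C) :
    (S.aPlus X Y S.zero).hom ≫ (S.dr (S.add X Y)).hom = S.addHom (𝟙 X) (S.dr Y).hom := by
  apply S.cancel_addR_zero
  apply (cancel_epi (S.aPlus X (S.add Y S.zero) S.zero).hom).mp
  apply (cancel_epi (S.addHom (𝟙 X) (S.aPlus Y S.zero S.zero).hom)).mp
  have pent := S.add_pentagon X Y S.zero S.zero
  have tri1 := S.add_triangle (S.add X Y) S.zero
  have tri2 := S.add_triangle Y S.zero
  have n1 := S.aPlus_natural (𝟙 X) (𝟙 Y) (S.gl S.zero).hom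
  rw [S.addHom_id] at n1
  have n2 := S.aPlus_natural (𝟙 X) (S.dr Y).hom (𝟙 S.zero)
  calc S.addHom (𝟙 X) (S.aPlus Y S.zero S.zero).hom
        ≫ (S.aPlus X (S.add Y S.zero) S.zero).hom
        ≫ S.addHom ((S.aPlus X Y S.zero).hom ≫ (S.dr (S.add X Y)).hom) (𝟙 S.zero)
      = S.addHom (𝟙 X) (S.aPlus Y S.zero S.zero).hom
          ≫ (S.aPlus X (S.add Y S.zero) S.zero).hom
          ≫ S.addHom (S.aPlus X Y S.zero).hom (𝟙 S.zero)
          ≫ S.addHom (S.dr (S.add X Y)).hom (𝟙 S.zero) := by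
        rw [S.addHom_comp_l]
    _ = (S.aPlus X Y (S.add S.zero S.zero)).hom ≫ (S.aPlus (S.add X Y) S.zero S.zero).hom
          ≫ S.addHom (S.dr (S.add X Y)).hom (𝟙 S.zero) := by
        rw [reassoc_of% pent]
    _ = (S.aPlus X Y (S.add S.zero S.zero)).hom
          ≫ S.addHom (𝟙 (S.add X Y)) (S.gl S.zero).hom := by rw [tri1]
    _ = S.addHom (𝟙 X) (S.addHom (𝟙 Y) (S.gl S.zero).hom) ≫ (S.aPlus X Y S.zero).hom := by
        rw [n1]
    _ = S.addHom (𝟙 X) ((S.aPlus Y S.zero S.zero).hom ≫ S.addHom (S.dr Y).hom (𝟙 S.zero))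
          ≫ (S.aPlus X Y S.zero).hom := by rw [tri2]
    _ = S.addHom (𝟙 X) (S.aPlus Y S.zero S.zero).hom
          ≫ S.addHom (𝟙 X) (S.addHom (S.dr Y).hom (𝟙 S.zero))
          ≫ (S.aPlus X Y S.zero).hom := by rw [S.addHom_comp_r]; simp only [Category.assoc]
    _ = S.addHom (𝟙 X) (S.aPlus Y S.zero S.zero).hom
          ≫ (S.aPlus X (S.add Y S.zero) S.zero).hom
          ≫ S.addHom (S.addHom (𝟙 X) (S.dr Y).hom) (𝟙 S.zero) := by rw [n2]

lemma gl_eq_csym_dr (Z : C) :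
    (S.csym S.zero Z).hom ≫ (S.dr Z).hom = (S.gl Z).hom := by
  have hex := S.add_hexagon S.zero S.zero Z
  have E1 : (S.aPlus S.zero S.zero Z).hom ≫ (S.csym (S.add S.zero S.zero) Z).hom
      ≫ (S.aPlus Z S.zero S.zero).hom ≫ (S.dr (S.add Z S.zero)).hom
      = S.addHom (𝟙 S.zero) (S.gl Z).hom ≫ (S.csym S.zero Z).hom := by
    rw [S.dr_add Z S.zero]
    rw [← S.csym_natural (S.dr S.zero).hom (𝟙 Z)]
    rw [reassoc_of% (S.add_triangle S.zero Z)]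
  have E2 : S.addHom (𝟙 S.zero) (S.csym S.zero Z).hom ≫ (S.aPlus S.zero Z S.zero).hom
      ≫ S.addHom (S.csym S.zero Z).hom (𝟙 S.zero) ≫ (S.dr (S.add Z S.zero)).hom
      = S.addHom (𝟙 S.zero) ((S.csym S.zero Z).hom ≫ (S.dr Z).hom)
        ≫ (S.csym S.zero Z).hom := by
    rw [S.dr_natural (S.csym S.zero Z).hom]
    rw [reassoc_of% (S.dr_add S.zero Z)]
    rw [S.addHom_comp_r]; simp only [Category.assoc]
  have key : S.addHom (𝟙 S.zero) (S.gl Z).hom ≫ (S.csym S.zero Z).hom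
      = S.addHom (𝟙 S.zero) ((S.csym S.zero Z).hom ≫ (S.dr Z).hom)
        ≫ (S.csym S.zero Z).hom := by
    calc S.addHom (𝟙 S.zero) (S.gl Z).hom ≫ (S.csym S.zero Z).hom
        = (S.aPlus S.zero S.zero Z).hom ≫ (S.csym (S.add S.zero S.zero) Z).hom
            ≫ (S.aPlus Z S.zero S.zero).hom ≫ (S.dr (S.add Z S.zero)).hom := E1.symm
      _ = S.addHom (𝟙 S.zero) (S.csym S.zero Z).hom ≫ (S.aPlus S.zero Z S.zero).hom
            ≫ S.addHom (S.csym S.zero Z).hom (𝟙 S.zero)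
            ≫ (S.dr (S.add Z S.zero)).hom := by rw [reassoc_of% hex]
      _ = S.addHom (𝟙 S.zero) ((S.csym S.zero Z).hom ≫ (S.dr Z).hom)
            ≫ (S.csym S.zero Z).hom := E2
  rw [cancel_mono] at key
  exact (S.addLeft_cancel key).symm

lemma csym_zero_dr (Z : C) :
    (S.csym Z S.zero).hom ≫ (S.gl Z).hom = (S.dr Z).hom := by
  rw [← S.gl_eq_csym_dr Z, ← Category.assoc, S.csym_symm Z S.zero, Category.id_comp]

/-! ### The left zero-distributivity morphism `L̂^A` -/

def LEq (A X : C) (f : S.mul A S.zero ⟶ S.zero) : Prop :=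
  (S.distL A S.zero X).hom ≫ S.addHom f (𝟙 (S.mul A X)) ≫ (S.gl (S.mul A X)).hom
    = S.mulHom (𝟙 A) (S.gl X).hom

lemma LEq_exists (A X : C) : ∃ f, S.LEq A X f := by
  obtain ⟨f, hf⟩ := S.addRight_full (Z := S.mul A X)
    ((S.distL A S.zero X).inv ≫ S.mulHom (𝟙 A) (S.gl X).hom ≫ (S.gl (S.mul A X)).inv)
  refine ⟨f, ?_⟩
  unfold LEq
  rw [hf]
  simp

lemma LEq_unique {A X : C} {f g : S.mul A S.zero ⟶ S.zero}
    (hf : S.LEq A X f) (hg : S.LEq A X g) : f = g := by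
  unfold LEq at hf hg
  rw [← hg] at hf
  rw [cancel_epi] at hf
  rw [cancel_mono] at hf
  exact S.addRight_cancel hf

lemma LEq_map {A X X' : C} {f : S.mul A S.zero ⟶ S.zero}
    (hf : S.LEq A X f) (φ : X ⟶ X') : S.LEq A X' f := by
  unfold LEq at hf ⊢
  apply (cancel_epi (S.mulHom (𝟙 A) (S.addHom (𝟙 S.zero) φ))).mp
  have hN := S.distL_natural (𝟙 A) (𝟙 S.zero) φ
  rw [S.mulHom_id] at hN
  calc S.mulHom (𝟙 A) (S.addHom (𝟙 S.zero) φ) ≫ (S.distL A S.zero X').hom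
        ≫ S.addHom f (𝟙 (S.mul A X')) ≫ (S.gl (S.mul A X')).hom
      = (S.distL A S.zero X).hom ≫ S.addHom (𝟙 (S.mul A S.zero)) (S.mulHom (𝟙 A) φ)
          ≫ S.addHom f (𝟙 (S.mul A X')) ≫ (S.gl (S.mul A X')).hom := by
        rw [reassoc_of% hN]
    _ = (S.distL A S.zero X).hom ≫ S.addHom f (𝟙 (S.mul A X))
          ≫ S.addHom (𝟙 S.zero) (S.mulHom (𝟙 A) φ) ≫ (S.gl (S.mul A X')).hom := by
        rw [← reassoc_of% (S.addHom_exch f (S.mulHom (𝟙 A) φ))]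
    _ = (S.distL A S.zero X).hom ≫ S.addHom f (𝟙 (S.mul A X))
          ≫ (S.gl (S.mul A X)).hom ≫ S.mulHom (𝟙 A) φ := by
        rw [S.gl_natural (S.mulHom (𝟙 A) φ)]
    _ = S.mulHom (𝟙 A) (S.gl X).hom ≫ S.mulHom (𝟙 A) φ := by
        rw [reassoc_of% hf]
    _ = S.mulHom (𝟙 A) (S.addHom (𝟙 S.zero) φ) ≫ S.mulHom (𝟙 A) (S.gl X').hom := by
        rw [← S.mulHom_comp_r, ← S.mulHom_comp_r, S.gl_natural φ]

lemma LEq_add {A X : C} {f : S.mul A S.zero ⟶ S.zero}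
    (hf : S.LEq A X f) (Y : C) : S.LEq A (S.add X Y) f := by
  unfold LEq at hf ⊢
  have hD := S.distL_aPlus A S.zero X Y
  have E2 : (S.distL A S.zero (S.add X Y)).hom
      ≫ S.addHom (𝟙 (S.mul A S.zero)) (S.distL A X Y).hom
      ≫ (S.aPlus (S.mul A S.zero) (S.mul A X) (S.mul A Y)).hom
      ≫ S.addHom (S.addHom f (𝟙 (S.mul A X))) (𝟙 (S.mul A Y))
      ≫ S.addHom (S.gl (S.mul A X)).hom (𝟙 (S.mul A Y))
      = S.mulHom (𝟙 A) (S.gl (S.add X Y)).hom ≫ (S.distL A X Y).hom := by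
    rw [← reassoc_of% hD]
    rw [← S.addHom_comp_l, ← S.addHom_comp_l, hf]
    have hN := S.distL_natural (𝟙 A) (S.gl X).hom (𝟙 Y)
    rw [S.mulHom_id] at hN
    rw [← hN]
    rw [← S.gl_add X Y, S.mulHom_comp_r]
    simp only [Category.assoc]
  have hn := S.aPlus_natural f (𝟙 (S.mul A X)) (𝟙 (S.mul A Y))
  rw [S.addHom_id] at hn
  have hchunk : S.addHom (𝟙 (S.mul A S.zero)) (S.distL A X Y).hom
      ≫ (S.aPlus (S.mul A S.zero) (S.mul A X) (S.mul A Y)).hom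
      ≫ S.addHom (S.addHom f (𝟙 (S.mul A X))) (𝟙 (S.mul A Y))
      ≫ S.addHom (S.gl (S.mul A X)).hom (𝟙 (S.mul A Y))
      ≫ (S.distL A X Y).inv
      = S.addHom f (𝟙 (S.mul A (S.add X Y))) ≫ (S.gl (S.mul A (S.add X Y))).hom := by
    rw [← reassoc_of% hn]
    rw [reassoc_of% (S.gl_add (S.mul A X) (S.mul A Y))]
    rw [← reassoc_of% (S.addHom_exch f (S.distL A X Y).hom)]
    rw [reassoc_of% (S.gl_natural (S.distL A X Y).hom)]
    simp
  rw [← hchunk]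
  rw [reassoc_of% E2]
  simp

lemma LEq_eq {A X Y : C} {f g : S.mul A S.zero ⟶ S.zero}
    (hf : S.LEq A X f) (hg : S.LEq A Y g) : f = g := by
  exact S.LEq_unique (S.LEq_add hf Y) (S.LEq_map (S.LEq_add hg X) (S.csym Y X).hom)

lemma LEq_dr {A : C} {f : S.mul A S.zero ⟶ S.zero}
    (hall : ∀ X, S.LEq A X f) (X : C) :
    (S.distL A X S.zero).hom ≫ S.addHom (𝟙 (S.mul A X)) f ≫ (S.dr (S.mul A X)).hom
      = S.mulHom (𝟙 A) (S.dr X).hom := by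
  have h := hall X
  unfold LEq at h
  calc (S.distL A X S.zero).hom ≫ S.addHom (𝟙 (S.mul A X)) f ≫ (S.dr (S.mul A X)).hom
      = (S.distL A X S.zero).hom ≫ S.addHom (𝟙 (S.mul A X)) f
          ≫ (S.csym (S.mul A X) S.zero).hom ≫ (S.gl (S.mul A X)).hom := by
        rw [S.csym_zero_dr]
    _ = (S.distL A X S.zero).hom ≫ (S.csym (S.mul A X) (S.mul A S.zero)).hom
          ≫ S.addHom f (𝟙 (S.mul A X)) ≫ (S.gl (S.mul A X)).hom := by
        rw [reassoc_of% (S.csym_natural (𝟙 (S.mul A X)) f)]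
    _ = S.mulHom (𝟙 A) (S.csym X S.zero).hom ≫ (S.distL A S.zero X).hom
          ≫ S.addHom f (𝟙 (S.mul A X)) ≫ (S.gl (S.mul A X)).hom := by
        rw [← reassoc_of% (S.distL_csym A X S.zero)]
    _ = S.mulHom (𝟙 A) (S.csym X S.zero).hom ≫ S.mulHom (𝟙 A) (S.gl X).hom := by
        rw [h]
    _ = S.mulHom (𝟙 A) (S.dr X).hom := by
        rw [← S.mulHom_comp_r, S.csym_zero_dr]

/-! ### The right zero-distributivity morphism `R̂^A` -/

def REq (A X : C) (f : S.mul S.zero A ⟶ S.zero) : Prop :=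
  (S.distR S.zero X A).hom ≫ S.addHom f (𝟙 (S.mul X A)) ≫ (S.gl (S.mul X A)).hom
    = S.mulHom (S.gl X).hom (𝟙 A)

lemma REq_exists (A X : C) : ∃ f, S.REq A X f := by
  obtain ⟨f, hf⟩ := S.addRight_full (Z := S.mul X A)
    ((S.distR S.zero X A).inv ≫ S.mulHom (S.gl X).hom (𝟙 A) ≫ (S.gl (S.mul X A)).inv)
  refine ⟨f, ?_⟩
  unfold REq
  rw [hf]
  simp

lemma REq_unique {A X : C} {f g : S.mul S.zero A ⟶ S.zero}
    (hf : S.REq A X f) (hg : S.REq A X g) : f = g := by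
  unfold REq at hf hg
  rw [← hg] at hf
  rw [cancel_epi] at hf
  rw [cancel_mono] at hf
  exact S.addRight_cancel hf

lemma REq_map {A X X' : C} {f : S.mul S.zero A ⟶ S.zero}
    (hf : S.REq A X f) (φ : X ⟶ X') : S.REq A X' f := by
  unfold REq at hf ⊢
  apply (cancel_epi (S.mulHom (S.addHom (𝟙 S.zero) φ) (𝟙 A))).mp
  have hN := S.distR_natural (𝟙 S.zero) φ (𝟙 A)
  rw [S.mulHom_id] at hN
  calc S.mulHom (S.addHom (𝟙 S.zero) φ) (𝟙 A) ≫ (S.distR S.zero X' A).hom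
        ≫ S.addHom f (𝟙 (S.mul X' A)) ≫ (S.gl (S.mul X' A)).hom
      = (S.distR S.zero X A).hom ≫ S.addHom (𝟙 (S.mul S.zero A)) (S.mulHom φ (𝟙 A))
          ≫ S.addHom f (𝟙 (S.mul X' A)) ≫ (S.gl (S.mul X' A)).hom := by
        rw [reassoc_of% hN]
    _ = (S.distR S.zero X A).hom ≫ S.addHom f (𝟙 (S.mul X A))
          ≫ S.addHom (𝟙 S.zero) (S.mulHom φ (𝟙 A)) ≫ (S.gl (S.mul X' A)).hom := by
        rw [← reassoc_of% (S.addHom_exch f (S.mulHom φ (𝟙 A)))]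
    _ = (S.distR S.zero X A).hom ≫ S.addHom f (𝟙 (S.mul X A))
          ≫ (S.gl (S.mul X A)).hom ≫ S.mulHom φ (𝟙 A) := by
        rw [S.gl_natural (S.mulHom φ (𝟙 A))]
    _ = S.mulHom (S.gl X).hom (𝟙 A) ≫ S.mulHom φ (𝟙 A) := by
        rw [reassoc_of% hf]
    _ = S.mulHom (S.addHom (𝟙 S.zero) φ) (𝟙 A) ≫ S.mulHom (S.gl X').hom (𝟙 A) := by
        rw [← S.mulHom_comp_l, ← S.mulHom_comp_l, S.gl_natural φ]

lemma REq_add {A X : C} {f : S.mul S.zero A ⟶ S.zero}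
    (hf : S.REq A X f) (Y : C) : S.REq A (S.add X Y) f := by
  unfold REq at hf ⊢
  have hD := S.distR_aPlus S.zero X Y A
  have E2 : (S.distR S.zero (S.add X Y) A).hom
      ≫ S.addHom (𝟙 (S.mul S.zero A)) (S.distR X Y A).hom
      ≫ (S.aPlus (S.mul S.zero A) (S.mul X A) (S.mul Y A)).hom
      ≫ S.addHom (S.addHom f (𝟙 (S.mul X A))) (𝟙 (S.mul Y A))
      ≫ S.addHom (S.gl (S.mul X A)).hom (𝟙 (S.mul Y A))
      = S.mulHom (S.gl (S.add X Y)).hom (𝟙 A) ≫ (S.distR X Y A).hom := by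
    rw [← reassoc_of% hD]
    rw [← S.addHom_comp_l, ← S.addHom_comp_l, hf]
    have hN := S.distR_natural (S.gl X).hom (𝟙 Y) (𝟙 A)
    rw [S.mulHom_id] at hN
    rw [← hN]
    rw [← S.gl_add X Y, S.mulHom_comp_l]
    simp only [Category.assoc]
  have hn := S.aPlus_natural f (𝟙 (S.mul X A)) (𝟙 (S.mul Y A))
  rw [S.addHom_id] at hn
  have hchunk : S.addHom (𝟙 (S.mul S.zero A)) (S.distR X Y A).hom
      ≫ (S.aPlus (S.mul S.zero A) (S.mul X A) (S.mul Y A)).hom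
      ≫ S.addHom (S.addHom f (𝟙 (S.mul X A))) (𝟙 (S.mul Y A))
      ≫ S.addHom (S.gl (S.mul X A)).hom (𝟙 (S.mul Y A))
      ≫ (S.distR X Y A).inv
      = S.addHom f (𝟙 (S.mul (S.add X Y) A)) ≫ (S.gl (S.mul (S.add X Y) A)).hom := by
    rw [← reassoc_of% hn]
    rw [reassoc_of% (S.gl_add (S.mul X A) (S.mul Y A))]
    rw [← reassoc_of% (S.addHom_exch f (S.distR X Y A).hom)]
    rw [reassoc_of% (S.gl_natural (S.distR X Y A).hom)]
    simp
  rw [← hchunk]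
  rw [reassoc_of% E2]
  simp

lemma REq_eq {A X Y : C} {f g : S.mul S.zero A ⟶ S.zero}
    (hf : S.REq A X f) (hg : S.REq A Y g) : f = g := by
  exact S.REq_unique (S.REq_add hf Y) (S.REq_map (S.REq_add hg X) (S.csym Y X).hom)

lemma REq_dr {A : C} {f : S.mul S.zero A ⟶ S.zero}
    (hall : ∀ X, S.REq A X f) (X : C) :
    (S.distR X S.zero A).hom ≫ S.addHom (𝟙 (S.mul X A)) f ≫ (S.dr (S.mul X A)).hom
      = S.mulHom (S.dr X).hom (𝟙 A) := by
  have h := hall X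
  unfold REq at h
  calc (S.distR X S.zero A).hom ≫ S.addHom (𝟙 (S.mul X A)) f ≫ (S.dr (S.mul X A)).hom
      = (S.distR X S.zero A).hom ≫ S.addHom (𝟙 (S.mul X A)) f
          ≫ (S.csym (S.mul X A) S.zero).hom ≫ (S.gl (S.mul X A)).hom := by
        rw [S.csym_zero_dr]
    _ = (S.distR X S.zero A).hom ≫ (S.csym (S.mul X A) (S.mul S.zero A)).hom
          ≫ S.addHom f (𝟙 (S.mul X A)) ≫ (S.gl (S.mul X A)).hom := by
        rw [reassoc_of% (S.csym_natural (𝟙 (S.mul X A)) f)]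
    _ = S.mulHom (S.csym X S.zero).hom (𝟙 A) ≫ (S.distR S.zero X A).hom
          ≫ S.addHom f (𝟙 (S.mul X A)) ≫ (S.gl (S.mul X A)).hom := by
        rw [← reassoc_of% (S.distR_csym X S.zero A)]
    _ = S.mulHom (S.csym X S.zero).hom (𝟙 A) ≫ S.mulHom (S.gl X).hom (𝟙 A) := by
        rw [h]
    _ = S.mulHom (S.dr X).hom (𝟙 A) := by
        rw [← S.mulHom_comp_l, S.csym_zero_dr]

end AnnCat

/-- Proposition 1: in an Ann-category there exist unique isomorphisms
`L̂^A : A ⊗ 0 → 0` and `R̂^A : 0 ⊗ A → 0` satisfying (2.1), (2.1'), (2.2), (2.2'). -/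
theorem ann_exists_unique_Lhat_Rhat {C : Type u} [Groupoid.{v} C] (S : AnnCat C) (A : C) :
    (∃! LA : S.mul A S.zero ≅ S.zero, ∀ X : C,
      ((S.distL A S.zero X).hom ≫ S.addHom LA.hom (𝟙 (S.mul A X)) ≫ (S.gl (S.mul A X)).hom
          = S.mulHom (𝟙 A) (S.gl X).hom) ∧
      ((S.distL A X S.zero).hom ≫ S.addHom (𝟙 (S.mul A X)) LA.hom ≫ (S.dr (S.mul A X)).hom
          = S.mulHom (𝟙 A) (S.dr X).hom)) ∧
    (∃! RA : S.mul S.zero A ≅ S.zero, ∀ X : C,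
      ((S.distR S.zero X A).hom ≫ S.addHom RA.hom (𝟙 (S.mul X A)) ≫ (S.gl (S.mul X A)).hom
          = S.mulHom (S.gl X).hom (𝟙 A)) ∧
      ((S.distR X S.zero A).hom ≫ S.addHom (𝟙 (S.mul X A)) RA.hom ≫ (S.dr (S.mul X A)).hom
          = S.mulHom (S.dr X).hom (𝟙 A))) := by
  constructor
  · obtain ⟨f0, hf0⟩ := S.LEq_exists A S.zero
    have hall : ∀ X, S.LEq A X f0 := by
      intro X
      obtain ⟨g, hg⟩ := S.LEq_exists A X
      have hfg : f0 = g := S.LEq_eq hf0 hg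
      rwa [hfg]
    refine ⟨asIso f0, fun X => ⟨hall X, S.LEq_dr hall X⟩, ?_⟩
    intro L' hL'
    apply Iso.ext
    show L'.hom = f0
    exact S.LEq_unique (X := S.zero) (hL' S.zero).1 (hall S.zero)
  · obtain ⟨f0, hf0⟩ := S.REq_exists A S.zero
    have hall : ∀ X, S.REq A X f0 := by
      intro X
      obtain ⟨g, hg⟩ := S.REq_exists A X
      have hfg : f0 = g := S.REq_eq hf0 hg
      rwa [hfg]
    refine ⟨asIso f0, fun X => ⟨hall X, S.REq_dr hall X⟩, ?_⟩
    intro R' hR'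
    apply Iso.ext
    show R'.hom = f0
    exact S.REq_unique (X := S.zero) (hR' S.zero).1 (hall S.zero)
end

section
/- In an Ann-category 𝒜, for all objects X, Y the diagram (2.3) commutes: L̂^{X⊗Y} ∘ a_{X,Y,0} = L̂^X ∘ (id_X ⊗ L̂^Y) as morphisms X ⊗ (Y ⊗ 0) → 0, where a_{X,Y,0} : X ⊗ (Y ⊗ 0) → (X ⊗ Y) ⊗ 0 is the ⊗-associativity constraint. (This is one half of axiom K16 of a ring category.) -/
open CategoryTheory

universe v u

namespace AnnCat

variable {C : Type u} [Groupoid.{v} C] (S : AnnCat C)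

/-- Uniqueness of `L̂^A`. -/
theorem lhat_unique {A : C} {f f' : S.mul A S.zero ⟶ S.zero}
    (hf : S.IsLhat A f) (hf' : S.IsLhat A f') : f = f' := by
  have h := (hf S.zero).trans (hf' S.zero).symm
  rw [cancel_epi] at h
  have key : S.addHom f (𝟙 (S.mul A S.zero)) = S.addHom f' (𝟙 (S.mul A S.zero)) := by
    have h2 : (S.addHom f (𝟙 (S.mul A S.zero)) ≫ (S.gl _).hom)
        = (S.addHom f' (𝟙 (S.mul A S.zero)) ≫ (S.gl _).hom) := by
      simpa using h
    rwa [cancel_mono] at h2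
  have k2 : S.addHom (𝟙 (S.mul A S.zero)) f ≫ S.addHom f (𝟙 S.zero)
      = S.addHom (𝟙 (S.mul A S.zero)) f ≫ S.addHom f' (𝟙 S.zero) := by
    rw [← S.addHom_comp, ← S.addHom_comp]
    simp only [Category.id_comp, Category.comp_id]
    calc S.addHom f f
        = S.addHom f (𝟙 _) ≫ S.addHom (𝟙 _) f := by
          rw [← S.addHom_comp]; simp
      _ = S.addHom f' (𝟙 _) ≫ S.addHom (𝟙 _) f := by rw [key]
      _ = S.addHom f' f := by rw [← S.addHom_comp]; simp
  rw [cancel_epi] at k2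
  have d := S.dr_natural f
  have d' := S.dr_natural f'
  rw [k2] at d
  rw [d'] at d
  rw [cancel_epi] at d
  exact d.symm

/-- The candidate `a⁻¹ ≫ (id_X ⊗ L̂^Y) ≫ L̂^X` satisfies the defining property of
`L̂^{X⊗Y}`. -/
theorem isLhat_mul {X Y : C} {LX : S.mul X S.zero ⟶ S.zero} (hLX : S.IsLhat X LX)
    {LY : S.mul Y S.zero ⟶ S.zero} (hLY : S.IsLhat Y LY) :
    S.IsLhat (S.mul X Y) ((S.aMul X Y S.zero).inv ≫ S.mulHom (𝟙 X) LY ≫ LX) := by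
  intro Z
  have e1 : (S.distL (S.mul X Y) S.zero Z).hom
      = (S.aMul X Y (S.add S.zero Z)).inv ≫ S.mulHom (𝟙 X) (S.distL Y S.zero Z).hom
        ≫ (S.distL X (S.mul Y S.zero) (S.mul Y Z)).hom
        ≫ S.addHom (S.aMul X Y S.zero).hom (S.aMul X Y Z).hom := by
    rw [Iso.eq_inv_comp]
    have := S.ann11 X Y S.zero Z
    exact this.symm
  rw [e1]
  have e2 : S.addHom (S.aMul X Y S.zero).hom (S.aMul X Y Z).hom
      ≫ S.addHom ((S.aMul X Y S.zero).inv ≫ S.mulHom (𝟙 X) LY ≫ LX) (𝟙 _)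
      = S.addHom (S.mulHom (𝟙 X) LY) (𝟙 (S.mul X (S.mul Y Z)))
        ≫ S.addHom LX (𝟙 (S.mul X (S.mul Y Z)))
        ≫ S.addHom (𝟙 S.zero) (S.aMul X Y Z).hom := by
    rw [← S.addHom_comp, ← S.addHom_comp, ← S.addHom_comp]
    simp
  have e3 : S.addHom (𝟙 S.zero) (S.aMul X Y Z).hom ≫ (S.gl _).hom
      = (S.gl (S.mul X (S.mul Y Z))).hom ≫ (S.aMul X Y Z).hom :=
    S.gl_natural (S.aMul X Y Z).hom
  have e4 : (S.distL X (S.mul Y S.zero) (S.mul Y Z)).hom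
      ≫ S.addHom (S.mulHom (𝟙 X) LY) (𝟙 (S.mul X (S.mul Y Z)))
      = S.mulHom (𝟙 X) (S.addHom LY (𝟙 (S.mul Y Z))) ≫ (S.distL X S.zero (S.mul Y Z)).hom := by
    have := S.distL_natural (𝟙 X) LY (𝟙 (S.mul Y Z))
    simp only [S.addHom_id, S.mulHom_id] at this
    rw [← this]
  have e5 : (S.distL X S.zero (S.mul Y Z)).hom
      ≫ S.addHom LX (𝟙 (S.mul X (S.mul Y Z))) ≫ (S.gl (S.mul X (S.mul Y Z))).hom
      = S.mulHom (𝟙 X) (S.gl (S.mul Y Z)).hom := hLX (S.mul Y Z)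
  calc ((S.aMul X Y (S.add S.zero Z)).inv ≫ S.mulHom (𝟙 X) (S.distL Y S.zero Z).hom
        ≫ (S.distL X (S.mul Y S.zero) (S.mul Y Z)).hom
        ≫ S.addHom (S.aMul X Y S.zero).hom (S.aMul X Y Z).hom)
      ≫ S.addHom ((S.aMul X Y S.zero).inv ≫ S.mulHom (𝟙 X) LY ≫ LX) (𝟙 _)
      ≫ (S.gl _).hom
      = (S.aMul X Y (S.add S.zero Z)).inv ≫ S.mulHom (𝟙 X) (S.distL Y S.zero Z).hom
        ≫ (S.distL X (S.mul Y S.zero) (S.mul Y Z)).hom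
        ≫ S.addHom (S.mulHom (𝟙 X) LY) (𝟙 (S.mul X (S.mul Y Z)))
        ≫ S.addHom LX (𝟙 (S.mul X (S.mul Y Z)))
        ≫ S.addHom (𝟙 S.zero) (S.aMul X Y Z).hom ≫ (S.gl _).hom := by
        simp only [Category.assoc]
        rw [← Category.assoc (S.addHom (S.aMul X Y S.zero).hom (S.aMul X Y Z).hom), e2]
        simp only [Category.assoc]
    _ = (S.aMul X Y (S.add S.zero Z)).inv ≫ S.mulHom (𝟙 X) (S.distL Y S.zero Z).hom
        ≫ S.mulHom (𝟙 X) (S.addHom LY (𝟙 (S.mul Y Z)))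
        ≫ (S.distL X S.zero (S.mul Y Z)).hom
        ≫ S.addHom LX (𝟙 (S.mul X (S.mul Y Z)))
        ≫ (S.gl (S.mul X (S.mul Y Z))).hom ≫ (S.aMul X Y Z).hom := by
        rw [e3]
        rw [← Category.assoc (S.distL X (S.mul Y S.zero) (S.mul Y Z)).hom, e4]
        simp only [Category.assoc]
    _ = (S.aMul X Y (S.add S.zero Z)).inv
        ≫ S.mulHom (𝟙 X) (S.mulHom (𝟙 Y) (S.gl Z).hom) ≫ (S.aMul X Y Z).hom := by
        rw [reassoc_of% e5]
        congr 1
        rw [← Category.assoc, ← Category.assoc, ← S.mulHom_comp, ← S.mulHom_comp]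
        simp only [Category.id_comp, Category.assoc]
        rw [hLY Z]
    _ = S.mulHom (𝟙 (S.mul X Y)) (S.gl Z).hom := by
        have := S.aMul_natural (𝟙 X) (𝟙 Y) (S.gl Z).hom
        rw [S.mulHom_id] at this
        rw [this]
        simp
end AnnCat

/-- Diagram (2.3): `L̂^{X⊗Y} ∘ a_{X,Y,0} = L̂^X ∘ (id_X ⊗ L̂^Y)` (half of axiom K16). -/
theorem ann_Lhat_mul {C : Type u} [Groupoid.{v} C] (S : AnnCat C) (X Y : C)
    (LX : S.mul X S.zero ≅ S.zero) (hLX : S.IsLhat X LX.hom)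
    (LY : S.mul Y S.zero ≅ S.zero) (hLY : S.IsLhat Y LY.hom)
    (LXY : S.mul (S.mul X Y) S.zero ≅ S.zero) (hLXY : S.IsLhat (S.mul X Y) LXY.hom) :
    (S.aMul X Y S.zero).hom ≫ LXY.hom = S.mulHom (𝟙 X) LY.hom ≫ LX.hom := by
  have h := S.lhat_unique hLXY (S.isLhat_mul hLX hLY)
  rw [h, ← Category.assoc]
  simp
end

section
/- In an Ann-category 𝒜, for all objects X, Y the diagram (2.3') commutes: R̂^{X⊗Y} = R̂^Y ∘ (R̂^X ⊗ id_Y) ∘ a_{0,X,Y} as morphisms 0 ⊗ (X ⊗ Y) → 0, where a_{0,X,Y} : 0 ⊗ (X ⊗ Y) → (0 ⊗ X) ⊗ Y is the ⊗-associativity constraint. (This is axiom K15 of a ring category.) -/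
open CategoryTheory

universe v u

namespace AnnCat

variable {C : Type u} [Groupoid.{v} C] (S : AnnCat C)

/-- Cancellation: if `f ⊕ 𝟙 Z = f' ⊕ 𝟙 Z` then `f = f'` (using ⊕-invertibility). -/
theorem add_cancel {A B : C} (Z : C) (f f' : A ⟶ B)
    (h : S.addHom f (𝟙 Z) = S.addHom f' (𝟙 Z)) : f = f' := by
  obtain ⟨Z', ⟨e⟩⟩ := S.add_inv Z
  have hZZ : ∀ g : A ⟶ B, S.addHom g (𝟙 (S.add Z Z'))
      = (S.aPlus A Z Z').hom ≫ S.addHom (S.addHom g (𝟙 Z)) (𝟙 Z')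
        ≫ (S.aPlus B Z Z').inv := by
    intro g
    have h1 := S.aPlus_natural g (𝟙 Z) (𝟙 Z')
    rw [S.addHom_id] at h1
    rw [← Category.assoc, ← h1]; simp
  have h2 : S.addHom f (𝟙 (S.add Z Z')) = S.addHom f' (𝟙 (S.add Z Z')) := by
    rw [hZZ, hZZ, h]
  have hsplit : ∀ g : A ⟶ B, S.addHom g e.hom
      = S.addHom (𝟙 A) e.hom ≫ S.addHom g (𝟙 S.zero) := by
    intro g; rw [← S.addHom_comp, Category.id_comp, Category.comp_id]
  have hsplit2 : ∀ g : A ⟶ B, S.addHom g e.hom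
      = S.addHom g (𝟙 (S.add Z Z')) ≫ S.addHom (𝟙 B) e.hom := by
    intro g; rw [← S.addHom_comp, Category.id_comp, Category.comp_id]
  have h3 : S.addHom (𝟙 A) e.hom ≫ S.addHom f (𝟙 S.zero)
      = S.addHom (𝟙 A) e.hom ≫ S.addHom f' (𝟙 S.zero) := by
    rw [← hsplit, ← hsplit, hsplit2, hsplit2, h2]
  haveI : IsIso (S.addHom (𝟙 A) e.hom) :=
    ⟨S.addHom (𝟙 A) e.inv, by rw [← S.addHom_comp]; simp [S.addHom_id],
      by rw [← S.addHom_comp]; simp [S.addHom_id]⟩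
  have h4 : S.addHom f (𝟙 S.zero) = S.addHom f' (𝟙 S.zero) :=
    (cancel_epi (S.addHom (𝟙 A) e.hom)).1 h3
  have h5 := S.dr_natural f
  have h6 := S.dr_natural f'
  rw [h4, h6] at h5
  exact ((Iso.cancel_iso_hom_left (S.dr A) _ _).1 h5).symm

/-- `R̂^A` is unique. -/
theorem rhat_unique (A : C) (f f' : S.mul S.zero A ⟶ S.zero)
    (hf : S.IsRhat A f) (hf' : S.IsRhat A f') : f = f' := by
  have h := (hf S.zero).trans (hf' S.zero).symm
  rw [Iso.cancel_iso_hom_left] at h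
  have h2 : S.addHom f (𝟙 (S.mul S.zero A)) = S.addHom f' (𝟙 (S.mul S.zero A)) := by
    have : Mono (S.gl (S.mul S.zero A)).hom := inferInstance
    exact (cancel_mono (S.gl (S.mul S.zero A)).hom).1 (by simpa using h)
  exact S.add_cancel _ f f' h2

end AnnCat

/-- Diagram (2.3'): `R̂^{X⊗Y} = R̂^Y ∘ (R̂^X ⊗ id_Y) ∘ a_{0,X,Y}` (axiom K15). -/
theorem ann_Rhat_mul {C : Type u} [Groupoid.{v} C] (S : AnnCat C) (X Y : C)
    (RX : S.mul S.zero X ≅ S.zero) (hRX : S.IsRhat X RX.hom)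
    (RY : S.mul S.zero Y ≅ S.zero) (hRY : S.IsRhat Y RY.hom)
    (RXY : S.mul S.zero (S.mul X Y) ≅ S.zero) (hRXY : S.IsRhat (S.mul X Y) RXY.hom) :
    RXY.hom = (S.aMul S.zero X Y).hom ≫ S.mulHom RX.hom (𝟙 Y) ≫ RY.hom := by
  set h : S.mul S.zero (S.mul X Y) ⟶ S.zero :=
    (S.aMul S.zero X Y).hom ≫ S.mulHom RX.hom (𝟙 Y) ≫ RY.hom with hdef
  refine S.rhat_unique (S.mul X Y) RXY.hom h hRXY ?_
  intro Z
  have hinv : (S.aMul S.zero X Y).inv ≫ h = S.mulHom RX.hom (𝟙 Y) ≫ RY.hom := by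
    rw [hdef, Iso.inv_hom_id_assoc]
  calc (S.distR S.zero Z (S.mul X Y)).hom ≫ S.addHom h (𝟙 (S.mul Z (S.mul X Y)))
          ≫ (S.gl (S.mul Z (S.mul X Y))).hom
      = (S.distR S.zero Z (S.mul X Y)).hom
          ≫ S.addHom (S.aMul S.zero X Y).hom (S.aMul Z X Y).hom
          ≫ S.addHom ((S.aMul S.zero X Y).inv ≫ h) (S.aMul Z X Y).inv
          ≫ (S.gl (S.mul Z (S.mul X Y))).hom := by
        have e1 : S.addHom h (𝟙 (S.mul Z (S.mul X Y)))
            = S.addHom (S.aMul S.zero X Y).hom (S.aMul Z X Y).hom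
              ≫ S.addHom ((S.aMul S.zero X Y).inv ≫ h) (S.aMul Z X Y).inv := by
          rw [← S.addHom_comp]; simp
        rw [e1]; simp only [Category.assoc]
    _ = (S.aMul (S.add S.zero Z) X Y).hom ≫ S.mulHom (S.distR S.zero Z X).hom (𝟙 Y)
          ≫ (S.distR (S.mul S.zero X) (S.mul Z X) Y).hom
          ≫ S.addHom (S.mulHom RX.hom (𝟙 Y) ≫ RY.hom) (S.aMul Z X Y).inv
          ≫ (S.gl (S.mul Z (S.mul X Y))).hom := by
        rw [hinv, ← Category.assoc, ← Category.assoc, ← S.ann11']; simp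
    _ = (S.aMul (S.add S.zero Z) X Y).hom ≫ S.mulHom (S.distR S.zero Z X).hom (𝟙 Y)
          ≫ (S.distR (S.mul S.zero X) (S.mul Z X) Y).hom
          ≫ S.addHom (S.mulHom RX.hom (𝟙 Y)) (𝟙 (S.mul (S.mul Z X) Y))
          ≫ S.addHom RY.hom (𝟙 (S.mul (S.mul Z X) Y))
          ≫ S.addHom (𝟙 S.zero) (S.aMul Z X Y).inv
          ≫ (S.gl (S.mul Z (S.mul X Y))).hom := by
        have e2 : S.addHom (S.mulHom RX.hom (𝟙 Y) ≫ RY.hom) (S.aMul Z X Y).inv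
            = S.addHom (S.mulHom RX.hom (𝟙 Y)) (𝟙 (S.mul (S.mul Z X) Y))
              ≫ S.addHom RY.hom (𝟙 (S.mul (S.mul Z X) Y))
              ≫ S.addHom (𝟙 S.zero) (S.aMul Z X Y).inv := by
          rw [← S.addHom_comp, ← S.addHom_comp]; simp
        rw [e2]; simp only [Category.assoc]
    _ = (S.aMul (S.add S.zero Z) X Y).hom ≫ S.mulHom (S.distR S.zero Z X).hom (𝟙 Y)
          ≫ S.mulHom (S.addHom RX.hom (𝟙 (S.mul Z X))) (𝟙 Y)
          ≫ (S.distR S.zero (S.mul Z X) Y).hom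
          ≫ S.addHom RY.hom (𝟙 (S.mul (S.mul Z X) Y))
          ≫ S.addHom (𝟙 S.zero) (S.aMul Z X Y).inv
          ≫ (S.gl (S.mul Z (S.mul X Y))).hom := by
        have hn := S.distR_natural RX.hom (𝟙 (S.mul Z X)) (𝟙 Y)
        rw [S.mulHom_id] at hn
        rw [reassoc_of% hn]
    _ = (S.aMul (S.add S.zero Z) X Y).hom ≫ S.mulHom (S.distR S.zero Z X).hom (𝟙 Y)
          ≫ S.mulHom (S.addHom RX.hom (𝟙 (S.mul Z X))) (𝟙 Y)
          ≫ (S.distR S.zero (S.mul Z X) Y).hom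
          ≫ S.addHom RY.hom (𝟙 (S.mul (S.mul Z X) Y))
          ≫ (S.gl (S.mul (S.mul Z X) Y)).hom
          ≫ (S.aMul Z X Y).inv := by
        have hg := S.gl_natural (S.aMul Z X Y).inv
        rw [hg]
    _ = (S.aMul (S.add S.zero Z) X Y).hom ≫ S.mulHom (S.distR S.zero Z X).hom (𝟙 Y)
          ≫ S.mulHom (S.addHom RX.hom (𝟙 (S.mul Z X))) (𝟙 Y)
          ≫ S.mulHom (S.gl (S.mul Z X)).hom (𝟙 Y)
          ≫ (S.aMul Z X Y).inv := by
        rw [reassoc_of% (hRY (S.mul Z X))]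
    _ = (S.aMul (S.add S.zero Z) X Y).hom
          ≫ S.mulHom (S.mulHom (S.gl Z).hom (𝟙 X)) (𝟙 Y)
          ≫ (S.aMul Z X Y).inv := by
        have e3 : S.mulHom (S.distR S.zero Z X).hom (𝟙 Y)
              ≫ S.mulHom (S.addHom RX.hom (𝟙 (S.mul Z X))) (𝟙 Y)
              ≫ S.mulHom (S.gl (S.mul Z X)).hom (𝟙 Y)
            = S.mulHom (S.mulHom (S.gl Z).hom (𝟙 X)) (𝟙 Y) := by
          rw [← S.mulHom_comp, ← S.mulHom_comp]
          simp only [Category.comp_id]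
          rw [hRX Z]
        rw [reassoc_of% e3]
    _ = S.mulHom (S.gl Z).hom (𝟙 (S.mul X Y)) := by
        have ha := S.aMul_natural (S.gl Z).hom (𝟙 X) (𝟙 Y)
        rw [S.mulHom_id] at ha
        rw [← reassoc_of% ha]; simp
end

section
/- In an Ann-category 𝒜, for all objects X, Y the diagram (2.4) commutes: L̂^X ∘ (id_X ⊗ R̂^Y) = R̂^Y ∘ (L̂^X ⊗ id_Y) ∘ a_{X,0,Y} as morphisms X ⊗ (0 ⊗ Y) → 0, where a_{X,0,Y} : X ⊗ (0 ⊗ Y) → (X ⊗ 0) ⊗ Y is the ⊗-associativity constraint. (This is the other half of axiom K16 of a ring category.) -/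
open CategoryTheory

universe v u

namespace AnnCat

variable {C : Type u} [Groupoid.{v} C] (S : AnnCat C)

lemma addHom_one_comp (A : C) {X Y Z : C} (f : X ⟶ Y) (g : Y ⟶ Z) :
    S.addHom (𝟙 A) f ≫ S.addHom (𝟙 A) g = S.addHom (𝟙 A) (f ≫ g) := by
  rw [← S.addHom_comp, Category.id_comp]

lemma mulHom_one_comp (A : C) {X Y Z : C} (f : X ⟶ Y) (g : Y ⟶ Z) :
    S.mulHom (𝟙 A) f ≫ S.mulHom (𝟙 A) g = S.mulHom (𝟙 A) (f ≫ g) := by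
  rw [← S.mulHom_comp, Category.id_comp]

lemma mulHom_comp_one (A : C) {X Y Z : C} (f : X ⟶ Y) (g : Y ⟶ Z) :
    S.mulHom f (𝟙 A) ≫ S.mulHom g (𝟙 A) = S.mulHom (f ≫ g) (𝟙 A) := by
  rw [← S.mulHom_comp, Category.id_comp]

/-- In a Picard category, `− ⊕ W` is faithful: cancellation of `⊕ 𝟙 W`. -/
lemma addHom_cancel {U V : C} (W : C) {f g : U ⟶ V}
    (h : S.addHom f (𝟙 W) = S.addHom g (𝟙 W)) : f = g := by
  obtain ⟨W', ⟨e⟩⟩ := S.add_inv W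
  have nf := S.aPlus_natural f (𝟙 W) (𝟙 W')
  have ng := S.aPlus_natural g (𝟙 W) (𝟙 W')
  rw [S.addHom_id] at nf ng
  rw [h] at nf
  have h2 : S.addHom f (𝟙 (S.add W W')) = S.addHom g (𝟙 (S.add W W')) :=
    (cancel_mono (S.aPlus V W W').hom).mp (nf.trans ng.symm)
  have ef : S.addHom f (𝟙 (S.add W W')) ≫ S.addHom (𝟙 V) e.hom
      = S.addHom (𝟙 U) e.hom ≫ S.addHom f (𝟙 S.zero) := by
    rw [← S.addHom_comp, ← S.addHom_comp, Category.id_comp, Category.comp_id,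
      Category.id_comp, Category.comp_id]
  have eg : S.addHom g (𝟙 (S.add W W')) ≫ S.addHom (𝟙 V) e.hom
      = S.addHom (𝟙 U) e.hom ≫ S.addHom g (𝟙 S.zero) := by
    rw [← S.addHom_comp, ← S.addHom_comp, Category.id_comp, Category.comp_id,
      Category.id_comp, Category.comp_id]
  have h3 : S.addHom f (𝟙 S.zero) = S.addHom g (𝟙 S.zero) := by
    have : S.addHom (𝟙 U) e.hom ≫ S.addHom f (𝟙 S.zero)
        = S.addHom (𝟙 U) e.hom ≫ S.addHom g (𝟙 S.zero) := by
      rw [← ef, ← eg, h2]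
    exact (cancel_epi _).mp this
  have df := S.dr_natural f
  have dg := S.dr_natural g
  rw [h3] at df
  exact (cancel_epi (S.dr U).hom).mp (df.symm.trans dg)

end AnnCat

/-- Diagram (2.4): `L̂^X ∘ (id_X ⊗ R̂^Y) = R̂^Y ∘ (L̂^X ⊗ id_Y) ∘ a_{X,0,Y}`
(the other half of axiom K16). -/
theorem ann_Lhat_Rhat_middle {C : Type u} [Groupoid.{v} C] (S : AnnCat C) (X Y : C)
    (LX : S.mul X S.zero ≅ S.zero) (hLX : S.IsLhat X LX.hom)
    (RY : S.mul S.zero Y ≅ S.zero) (hRY : S.IsRhat Y RY.hom) :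
    S.mulHom (𝟙 X) RY.hom ≫ LX.hom
      = (S.aMul X S.zero Y).hom ≫ S.mulHom LX.hom (𝟙 Y) ≫ RY.hom := by
  have n1 := S.distL_natural (𝟙 X) RY.hom (𝟙 (S.mul S.zero Y))
  rw [S.mulHom_id] at n1
  have E1 : S.mulHom (𝟙 X) (S.distR S.zero S.zero Y).hom
      ≫ (S.distL X (S.mul S.zero Y) (S.mul S.zero Y)).hom
      ≫ S.addHom (S.mulHom (𝟙 X) RY.hom ≫ LX.hom) (𝟙 (S.mul X (S.mul S.zero Y)))
      ≫ (S.gl (S.mul X (S.mul S.zero Y))).hom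
      = S.mulHom (𝟙 X) (S.mulHom (S.gl S.zero).hom (𝟙 Y)) := by
    rw [show S.addHom (S.mulHom (𝟙 X) RY.hom ≫ LX.hom) (𝟙 (S.mul X (S.mul S.zero Y)))
        = S.addHom (S.mulHom (𝟙 X) RY.hom) (𝟙 (S.mul X (S.mul S.zero Y)))
          ≫ S.addHom LX.hom (𝟙 (S.mul X (S.mul S.zero Y))) by
      rw [← S.addHom_comp, Category.id_comp]]
    slice_lhs 2 3 => rw [← n1]
    slice_lhs 3 5 => rw [hLX (S.mul S.zero Y)]
    rw [S.mulHom_one_comp, S.mulHom_one_comp, hRY S.zero]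
  have a12 := S.ann12 X S.zero S.zero Y
  have n2 := S.distR_natural LX.hom (𝟙 (S.mul X S.zero)) (𝟙 Y)
  rw [S.mulHom_id] at n2
  have n3 := S.gl_natural (S.aMul X S.zero Y).inv
  have n4 := S.aMul_natural (𝟙 X) (S.gl S.zero).hom (𝟙 Y)
  have E2 : S.mulHom (𝟙 X) (S.distR S.zero S.zero Y).hom
      ≫ (S.distL X (S.mul S.zero Y) (S.mul S.zero Y)).hom
      ≫ S.addHom ((S.aMul X S.zero Y).hom ≫ S.mulHom LX.hom (𝟙 Y) ≫ RY.hom)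
          (𝟙 (S.mul X (S.mul S.zero Y)))
      ≫ (S.gl (S.mul X (S.mul S.zero Y))).hom
      = S.mulHom (𝟙 X) (S.mulHom (S.gl S.zero).hom (𝟙 Y)) := by
    rw [show S.addHom ((S.aMul X S.zero Y).hom ≫ S.mulHom LX.hom (𝟙 Y) ≫ RY.hom)
          (𝟙 (S.mul X (S.mul S.zero Y)))
        = S.addHom (S.aMul X S.zero Y).hom (S.aMul X S.zero Y).hom
          ≫ S.addHom (S.mulHom LX.hom (𝟙 Y)) (𝟙 (S.mul (S.mul X S.zero) Y))
          ≫ S.addHom RY.hom (𝟙 (S.mul (S.mul X S.zero) Y))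
          ≫ S.addHom (𝟙 S.zero) (S.aMul X S.zero Y).inv by
      rw [← S.addHom_comp, ← S.addHom_comp, ← S.addHom_comp]
      simp]
    slice_lhs 1 3 => rw [← a12]
    slice_lhs 3 4 => rw [← n2]
    slice_lhs 6 7 => rw [n3]
    slice_lhs 4 6 => rw [hRY (S.mul X S.zero)]
    slice_lhs 2 4 => rw [S.mulHom_comp_one, S.mulHom_comp_one, hLX S.zero]
    slice_lhs 1 2 => rw [← n4]
    simp
  have E := (cancel_epi (S.distL X (S.mul S.zero Y) (S.mul S.zero Y)).hom).mp
    ((cancel_epi (S.mulHom (𝟙 X) (S.distR S.zero S.zero Y).hom)).mp (E1.trans E2.symm))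
  have E' := (cancel_mono (S.gl (S.mul X (S.mul S.zero Y))).hom).mp E
  exact S.addHom_cancel _ E'
end

section
/- In an Ann-category 𝒜, for all objects X, Y the diagram (2.5) commutes: g_0 ∘ (R̂^X ⊕ R̂^Y) ∘ 𝔏_{0,X,Y} = R̂^{X⊕Y} as morphisms 0 ⊗ (X ⊕ Y) → 0, where g_0 = d_0 : 0 ⊕ 0 → 0. (This is axiom K11 of a ring category.) -/
open CategoryTheory

universe v u

namespace AnnCat

variable {C : Type u} [Groupoid.{v} C] (A : AnnCat C)

lemma addL_eq {X Y : C} (f : X ⟶ Y) :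
    A.addHom (𝟙 A.zero) f = (A.gl X).hom ≫ f ≫ (A.gl Y).inv := by
  rw [← Category.assoc, ← A.gl_natural f, Category.assoc, Iso.hom_inv_id, Category.comp_id]

lemma addR_eq {X Y : C} (f : X ⟶ Y) :
    A.addHom f (𝟙 A.zero) = (A.dr X).hom ≫ f ≫ (A.dr Y).inv := by
  rw [← Category.assoc, ← A.dr_natural f, Category.assoc, Iso.hom_inv_id, Category.comp_id]

lemma addL_inj {X Y : C} {f g : X ⟶ Y}
    (h : A.addHom (𝟙 A.zero) f = A.addHom (𝟙 A.zero) g) : f = g := by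
  rw [A.addL_eq, A.addL_eq] at h
  rwa [cancel_epi, cancel_mono] at h

lemma addR_inj {X Y : C} {f g : X ⟶ Y}
    (h : A.addHom f (𝟙 A.zero) = A.addHom g (𝟙 A.zero)) : f = g := by
  rw [A.addR_eq, A.addR_eq] at h
  rwa [cancel_epi, cancel_mono] at h

lemma gl_add_s6 (X : C) :
    (A.gl (A.add A.zero X)).hom = A.addHom (𝟙 A.zero) (A.gl X).hom :=
  ((cancel_mono (A.gl X).hom).mp (A.gl_natural (A.gl X).hom)).symm

lemma aPlus_inv_natural {X X' Y Y' Z Z' : C} (f : X ⟶ X') (g : Y ⟶ Y') (h : Z ⟶ Z') :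
    A.addHom (A.addHom f g) h ≫ (A.aPlus X' Y' Z').inv
      = (A.aPlus X Y Z).inv ≫ A.addHom f (A.addHom g h) := by
  rw [Iso.comp_inv_eq, Category.assoc, A.aPlus_natural, Iso.inv_hom_id_assoc]

end AnnCat
namespace AnnCat

variable {C : Type u} [Groupoid.{v} C] (A : AnnCat C)

lemma kelly_l (X Y : C) :
    (A.aPlus A.zero X Y).hom ≫ A.addHom (A.gl X).hom (𝟙 Y) = (A.gl (A.add X Y)).hom := by
  apply A.addL_inj
  have pent := A.add_pentagon A.zero A.zero X Y
  have key0 := congrArg (· ≫ A.addHom (A.addHom (A.dr A.zero).hom (𝟙 X)) (𝟙 Y)) pent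
  simp only [Category.assoc] at key0
  rw [← A.addHom_comp (A.aPlus A.zero A.zero X).hom
        (A.addHom (A.dr A.zero).hom (𝟙 X)) (𝟙 Y) (𝟙 Y)] at key0
  rw [A.add_triangle A.zero X, Category.comp_id] at key0
  rw [← A.aPlus_natural (𝟙 A.zero) (A.gl X).hom (𝟙 Y)] at key0
  rw [← reassoc_of% (A.addHom_comp (𝟙 A.zero) (𝟙 A.zero) (A.aPlus A.zero X Y).hom
        (A.addHom (A.gl X).hom (𝟙 Y)))] at key0
  rw [← A.aPlus_natural (A.dr A.zero).hom (𝟙 X) (𝟙 Y), A.addHom_id X Y] at key0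
  rw [reassoc_of% (A.add_triangle A.zero (A.add X Y))] at key0
  exact (cancel_mono _).mp key0

lemma kelly_r (X Y : C) :
    (A.aPlus X Y A.zero).hom ≫ (A.dr (A.add X Y)).hom = A.addHom (𝟙 X) (A.dr Y).hom := by
  apply A.addR_inj
  have pent := A.add_pentagon X Y A.zero A.zero
  have key0 := congrArg (· ≫ A.addHom (A.dr (A.add X Y)).hom (𝟙 A.zero)) pent
  simp only [Category.assoc] at key0
  -- RHS of key0: triangle at (X⊕Y, 0), then naturality
  rw [A.add_triangle (A.add X Y) A.zero] at key0
  rw [← A.addHom_id X Y, ← A.aPlus_natural (𝟙 X) (𝟙 Y) (A.gl A.zero).hom] at key0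
  -- LHS of key0: merge the two right addHoms
  rw [← A.addHom_comp (A.aPlus X Y A.zero).hom (A.dr (A.add X Y)).hom
        (𝟙 A.zero) (𝟙 A.zero), Category.comp_id] at key0
  -- candidate
  have cand : A.addHom (𝟙 X) (A.aPlus Y A.zero A.zero).hom ≫ (A.aPlus X (A.add Y A.zero) A.zero).hom
        ≫ A.addHom (A.addHom (𝟙 X) (A.dr Y).hom) (𝟙 A.zero)
      = A.addHom (𝟙 X) (A.addHom (𝟙 Y) (A.gl A.zero).hom) ≫ (A.aPlus X Y A.zero).hom := by
    rw [← A.aPlus_natural (𝟙 X) (A.dr Y).hom (𝟙 A.zero)]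
    rw [← reassoc_of% (A.addHom_comp (𝟙 X) (𝟙 X) (A.aPlus Y A.zero A.zero).hom
          (A.addHom (A.dr Y).hom (𝟙 A.zero)))]
    rw [A.add_triangle Y A.zero]
  rw [← cand] at key0
  rw [cancel_epi, cancel_epi] at key0
  exact key0

end AnnCat
namespace AnnCat

variable {C : Type u} [Groupoid.{v} C] (A : AnnCat C)

lemma csym_gl (Y : C) : (A.csym A.zero Y).hom ≫ (A.dr Y).hom = (A.gl Y).hom := by
  have hex := A.add_hexagon A.zero A.zero Y
  have key0 := congrArg (· ≫ (A.dr (A.add Y A.zero)).hom) hex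
  simp only [Category.assoc] at key0
  rw [A.kelly_r Y A.zero] at key0
  rw [← A.csym_natural (A.dr A.zero).hom (𝟙 Y)] at key0
  rw [reassoc_of% (A.add_triangle A.zero Y)] at key0
  rw [A.dr_natural (A.csym A.zero Y).hom] at key0
  rw [reassoc_of% (A.kelly_r A.zero Y)] at key0
  rw [← reassoc_of% (A.addHom_comp (𝟙 A.zero) (𝟙 A.zero) (A.csym A.zero Y).hom
        (A.dr Y).hom)] at key0
  rw [cancel_mono] at key0
  exact (A.addL_inj key0).symm

lemma csym_dr (Y : C) : (A.csym Y A.zero).hom ≫ (A.gl Y).hom = (A.dr Y).hom := by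
  rw [← A.csym_gl Y, ← Category.assoc, A.csym_symm, Category.id_comp]

end AnnCat
namespace AnnCat

variable {C : Type u} [Groupoid.{v} C] (A : AnnCat C)

lemma addHom_split₂ {X Y Z U V : C} (x : X ⟶ Y) (y : Y ⟶ Z) (k : U ⟶ V) :
    A.addHom (x ≫ y) k = A.addHom x k ≫ A.addHom y (𝟙 V) := by
  rw [← A.addHom_comp, Category.comp_id]

lemma addHom_split₂' {X Y Z U V : C} (x : X ⟶ Y) (y : Y ⟶ Z) (k : U ⟶ V) :
    A.addHom (x ≫ y) k = A.addHom x (𝟙 U) ≫ A.addHom y k := by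
  rw [← A.addHom_comp, Category.id_comp]

lemma addHom_merge {X Y Z U V : C} (x : X ⟶ Y) (y : Y ⟶ Z) (k : U ⟶ V) :
    A.addHom x k ≫ A.addHom y (𝟙 V) = A.addHom (x ≫ y) k :=
  (A.addHom_split₂ x y k).symm

/-- The middle-four interchange map built from `aPlus`, `csym`, identities. -/
def vmap (P Q R T : C) : A.add (A.add P Q) (A.add R T) ⟶ A.add (A.add P R) (A.add Q T) :=
  (A.aPlus (A.add P Q) R T).hom
    ≫ A.addHom (A.aPlus P Q R).inv (𝟙 T)
    ≫ A.addHom (A.addHom (𝟙 P) (A.csym Q R).hom) (𝟙 T)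
    ≫ A.addHom (A.aPlus P R Q).hom (𝟙 T)
    ≫ (A.aPlus (A.add P R) Q T).inv

lemma vmap_merge (P Q R T : C) :
    A.vmap P Q R T = (A.aPlus (A.add P Q) R T).hom
      ≫ A.addHom ((A.aPlus P Q R).inv
          ≫ A.addHom (𝟙 P) (A.csym Q R).hom ≫ (A.aPlus P R Q).hom) (𝟙 T)
      ≫ (A.aPlus (A.add P R) Q T).inv := by
  unfold vmap
  rw [A.addHom_split₂' ((A.aPlus P Q R).inv)
        (A.addHom (𝟙 P) (A.csym Q R).hom ≫ (A.aPlus P R Q).hom) (𝟙 T)]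
  rw [A.addHom_split₂' (A.addHom (𝟙 P) (A.csym Q R).hom) ((A.aPlus P R Q).hom) (𝟙 T)]
  simp only [Category.assoc]

lemma mid_natural {P P' Q Q' R R' : C} (f : P ⟶ P') (u : Q ⟶ Q') (h : R ⟶ R') :
    A.addHom (A.addHom f u) h
        ≫ (A.aPlus P' Q' R').inv ≫ A.addHom (𝟙 P') (A.csym Q' R').hom ≫ (A.aPlus P' R' Q').hom
      = ((A.aPlus P Q R).inv ≫ A.addHom (𝟙 P) (A.csym Q R).hom ≫ (A.aPlus P R Q).hom)
        ≫ A.addHom (A.addHom f h) u := by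
  rw [reassoc_of% (A.aPlus_inv_natural f u h)]
  simp only [Category.assoc]
  congr 1
  rw [← reassoc_of% (A.addHom_comp f (𝟙 P') (A.addHom u h) (A.csym Q' R').hom)]
  rw [A.csym_natural u h]
  rw [← A.aPlus_natural f h u]
  rw [← reassoc_of% (A.addHom_comp (𝟙 P) f (A.csym Q R).hom (A.addHom h u))]

lemma vmap_natural {P P' Q Q' R R' T T' : C} (f : P ⟶ P') (u : Q ⟶ Q') (h : R ⟶ R') (k : T ⟶ T') :
    A.addHom (A.addHom f u) (A.addHom h k) ≫ A.vmap P' Q' R' T'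
      = A.vmap P Q R T ≫ A.addHom (A.addHom f h) (A.addHom u k) := by
  rw [A.vmap_merge, A.vmap_merge]
  rw [← Category.assoc, A.aPlus_natural (A.addHom f u) h k]
  simp only [Category.assoc]
  congr 1
  rw [← reassoc_of% (A.addHom_comp (A.addHom (A.addHom f u) h)
        ((A.aPlus P' Q' R').inv ≫ A.addHom (𝟙 P') (A.csym Q' R').hom ≫ (A.aPlus P' R' Q').hom)
        k (𝟙 T'))]
  rw [A.mid_natural f u h]
  rw [A.addHom_split₂'
        ((A.aPlus P Q R).inv ≫ A.addHom (𝟙 P) (A.csym Q R).hom ≫ (A.aPlus P R Q).hom)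
        (A.addHom (A.addHom f h) u) k]
  simp only [Category.assoc]
  congr 1
  rw [A.aPlus_inv_natural (A.addHom f h) u k]

end AnnCat
namespace AnnCat

variable {C : Type u} [Groupoid.{v} C] (A : AnnCat C)

lemma vcoh (Q T : C) :
    A.vmap A.zero Q A.zero T ≫ A.addHom (A.gl A.zero).hom (𝟙 (A.add Q T)) ≫ (A.gl (A.add Q T)).hom
      = A.addHom (A.gl Q).hom (A.gl T).hom := by
  have s1 : (A.aPlus (A.add A.zero A.zero) Q T).inv ≫ A.addHom (A.gl A.zero).hom (𝟙 (A.add Q T))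
      = A.addHom (A.addHom (A.gl A.zero).hom (𝟙 Q)) (𝟙 T) ≫ (A.aPlus A.zero Q T).inv := by
    rw [A.aPlus_inv_natural (A.gl A.zero).hom (𝟙 Q) (𝟙 T), A.addHom_id]
  have s2 : (A.aPlus A.zero Q T).inv ≫ (A.gl (A.add Q T)).hom
      = A.addHom (A.gl Q).hom (𝟙 T) := by
    rw [Iso.inv_comp_eq, ← A.kelly_l Q T]
  have s5 : (A.aPlus A.zero Q A.zero).inv ≫ A.addHom (𝟙 A.zero) (A.dr Q).hom
      = (A.dr (A.add A.zero Q)).hom := by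
    rw [Iso.inv_comp_eq, ← A.kelly_r A.zero Q]
  unfold vmap
  simp only [Category.assoc]
  rw [reassoc_of% s1, s2]
  rw [← reassoc_of% (A.addHom_split₂ (A.aPlus A.zero A.zero Q).hom
        (A.addHom (A.gl A.zero).hom (𝟙 Q)) (𝟙 T))]
  rw [A.kelly_l A.zero Q, A.gl_add_s6 Q]
  rw [← reassoc_of% (A.addHom_split₂ (A.addHom (𝟙 A.zero) (A.csym Q A.zero).hom)
        (A.addHom (𝟙 A.zero) (A.gl Q).hom) (𝟙 T))]
  rw [← A.addHom_comp (𝟙 A.zero) (𝟙 A.zero) (A.csym Q A.zero).hom (A.gl Q).hom,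
      Category.comp_id, A.csym_dr Q]
  rw [← reassoc_of% (A.addHom_split₂ ((A.aPlus A.zero Q A.zero).inv)
        (A.addHom (𝟙 A.zero) (A.dr Q).hom) (𝟙 T))]
  rw [s5]
  rw [reassoc_of% (A.add_triangle (A.add A.zero Q) T)]
  rw [← A.addHom_comp (𝟙 (A.add A.zero Q)) (A.gl Q).hom (A.gl T).hom (𝟙 T),
      Category.id_comp, Category.comp_id]

end AnnCat
namespace AnnCat

variable {C : Type u} [Groupoid.{v} C] (A : AnnCat C)

lemma addHom_split_lr {X Y U V : C} (f : X ⟶ Y) (g : U ⟶ V) :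
    A.addHom f g = A.addHom f (𝟙 U) ≫ A.addHom (𝟙 Y) g := by
  rw [← A.addHom_comp, Category.comp_id, Category.id_comp]

/-- (Ann-2) compatibility of `distL` and `distR`, restated using `vmap`. -/
lemma ann13v (a b x y : C) :
    (A.distL (A.add a b) x y).hom ≫ A.addHom (A.distR a b x).hom (A.distR a b y).hom
        ≫ A.vmap (A.mul a x) (A.mul b x) (A.mul a y) (A.mul b y)
      = (A.distR a b (A.add x y)).hom ≫ A.addHom (A.distL a x y).hom (A.distL b x y).hom := by
  have h := A.ann13 a b x y
  simpa only [vmap, Category.assoc] using h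

end AnnCat

/-- Diagram (2.5): `g_0 ∘ (R̂^X ⊕ R̂^Y) ∘ 𝔏_{0,X,Y} = R̂^{X⊕Y}` (axiom K11). -/
theorem ann_Rhat_add {C : Type u} [Groupoid.{v} C] (S : AnnCat C) (X Y : C)
    (RX : S.mul S.zero X ≅ S.zero) (hRX : S.IsRhat X RX.hom)
    (RY : S.mul S.zero Y ≅ S.zero) (hRY : S.IsRhat Y RY.hom)
    (RXY : S.mul S.zero (S.add X Y) ≅ S.zero) (hRXY : S.IsRhat (S.add X Y) RXY.hom) :
    (S.distL S.zero X Y).hom ≫ S.addHom RX.hom RY.hom ≫ (S.gl S.zero).hom = RXY.hom := by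
  have hF : S.IsRhat (S.add X Y)
      ((S.distL S.zero X Y).hom ≫ S.addHom RX.hom RY.hom ≫ (S.gl S.zero).hom) := by
    intro Z
    symm
    calc S.mulHom (S.gl Z).hom (𝟙 (S.add X Y))
        = S.mulHom (S.gl Z).hom (𝟙 (S.add X Y)) ≫ (S.distL Z X Y).hom ≫ (S.distL Z X Y).inv := by
          rw [Iso.hom_inv_id, Category.comp_id]
      _ = (S.distL (S.add S.zero Z) X Y).hom
            ≫ S.addHom (S.mulHom (S.gl Z).hom (𝟙 X)) (S.mulHom (S.gl Z).hom (𝟙 Y))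
            ≫ (S.distL Z X Y).inv := by
          rw [← S.addHom_id X Y, reassoc_of% (S.distL_natural (S.gl Z).hom (𝟙 X) (𝟙 Y))]
      _ = (S.distL (S.add S.zero Z) X Y).hom
            ≫ S.addHom
                ((S.distR S.zero Z X).hom ≫ S.addHom RX.hom (𝟙 (S.mul Z X)) ≫ (S.gl (S.mul Z X)).hom)
                ((S.distR S.zero Z Y).hom ≫ S.addHom RY.hom (𝟙 (S.mul Z Y)) ≫ (S.gl (S.mul Z Y)).hom)
            ≫ (S.distL Z X Y).inv := by
          rw [hRX Z, hRY Z]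
      _ = (S.distL (S.add S.zero Z) X Y).hom
            ≫ S.addHom (S.distR S.zero Z X).hom (S.distR S.zero Z Y).hom
            ≫ S.addHom (S.addHom RX.hom (𝟙 (S.mul Z X))) (S.addHom RY.hom (𝟙 (S.mul Z Y)))
            ≫ S.addHom (S.gl (S.mul Z X)).hom (S.gl (S.mul Z Y)).hom
            ≫ (S.distL Z X Y).inv := by
          rw [S.addHom_comp, S.addHom_comp]
          simp only [Category.assoc]
      _ = (S.distL (S.add S.zero Z) X Y).hom
            ≫ S.addHom (S.distR S.zero Z X).hom (S.distR S.zero Z Y).hom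
            ≫ S.addHom (S.addHom RX.hom (𝟙 (S.mul Z X))) (S.addHom RY.hom (𝟙 (S.mul Z Y)))
            ≫ S.vmap S.zero (S.mul Z X) S.zero (S.mul Z Y)
            ≫ S.addHom (S.gl S.zero).hom (𝟙 (S.add (S.mul Z X) (S.mul Z Y)))
            ≫ (S.gl (S.add (S.mul Z X) (S.mul Z Y))).hom
            ≫ (S.distL Z X Y).inv := by
          rw [← S.vcoh (S.mul Z X) (S.mul Z Y)]
          simp only [Category.assoc]
      _ = (S.distL (S.add S.zero Z) X Y).hom
            ≫ S.addHom (S.distR S.zero Z X).hom (S.distR S.zero Z Y).hom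
            ≫ S.vmap (S.mul S.zero X) (S.mul Z X) (S.mul S.zero Y) (S.mul Z Y)
            ≫ S.addHom (S.addHom RX.hom RY.hom) (𝟙 (S.add (S.mul Z X) (S.mul Z Y)))
            ≫ S.addHom (S.gl S.zero).hom (𝟙 (S.add (S.mul Z X) (S.mul Z Y)))
            ≫ (S.gl (S.add (S.mul Z X) (S.mul Z Y))).hom
            ≫ (S.distL Z X Y).inv := by
          rw [reassoc_of% (S.vmap_natural RX.hom (𝟙 (S.mul Z X)) RY.hom (𝟙 (S.mul Z Y))),
            S.addHom_id]
      _ = (S.distR S.zero Z (S.add X Y)).hom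
            ≫ S.addHom (S.distL S.zero X Y).hom (S.distL Z X Y).hom
            ≫ S.addHom (S.addHom RX.hom RY.hom) (𝟙 (S.add (S.mul Z X) (S.mul Z Y)))
            ≫ S.addHom (S.gl S.zero).hom (𝟙 (S.add (S.mul Z X) (S.mul Z Y)))
            ≫ (S.gl (S.add (S.mul Z X) (S.mul Z Y))).hom
            ≫ (S.distL Z X Y).inv := by
          rw [reassoc_of% (S.ann13v S.zero Z X Y)]
      _ = (S.distR S.zero Z (S.add X Y)).hom
            ≫ S.addHom ((S.distL S.zero X Y).hom ≫ S.addHom RX.hom RY.hom ≫ (S.gl S.zero).hom)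
                (S.distL Z X Y).hom
            ≫ (S.gl (S.add (S.mul Z X) (S.mul Z Y))).hom
            ≫ (S.distL Z X Y).inv := by
          rw [← reassoc_of% (S.addHom_split₂ (S.addHom RX.hom RY.hom) (S.gl S.zero).hom
                (𝟙 (S.add (S.mul Z X) (S.mul Z Y))))]
          rw [← reassoc_of% (S.addHom_split₂ (S.distL S.zero X Y).hom
                (S.addHom RX.hom RY.hom ≫ (S.gl S.zero).hom) (S.distL Z X Y).hom)]
      _ = (S.distR S.zero Z (S.add X Y)).hom
            ≫ S.addHom ((S.distL S.zero X Y).hom ≫ S.addHom RX.hom RY.hom ≫ (S.gl S.zero).hom)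
                (𝟙 (S.mul Z (S.add X Y)))
            ≫ (S.gl (S.mul Z (S.add X Y))).hom := by
          rw [S.addHom_split_lr
                ((S.distL S.zero X Y).hom ≫ S.addHom RX.hom RY.hom ≫ (S.gl S.zero).hom)
                (S.distL Z X Y).hom]
          simp only [Category.assoc]
          rw [reassoc_of% (S.gl_natural (S.distL Z X Y).hom)]
          rw [Iso.hom_inv_id, Category.comp_id]
  -- uniqueness of R̂^{X⊕Y}
  have h3 : S.addHom ((S.distL S.zero X Y).hom ≫ S.addHom RX.hom RY.hom ≫ (S.gl S.zero).hom)
        (𝟙 (S.mul S.zero (S.add X Y)))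
      = S.addHom RXY.hom (𝟙 (S.mul S.zero (S.add X Y))) := by
    have h := (hF S.zero).trans (hRXY S.zero).symm
    rw [cancel_epi] at h
    rwa [cancel_mono] at h
  apply S.addR_inj
  have h4 : S.addHom ((S.distL S.zero X Y).hom ≫ S.addHom RX.hom RY.hom ≫ (S.gl S.zero).hom)
        RXY.hom = S.addHom RXY.hom RXY.hom := by
    calc S.addHom ((S.distL S.zero X Y).hom ≫ S.addHom RX.hom RY.hom ≫ (S.gl S.zero).hom) RXY.hom
        = S.addHom ((S.distL S.zero X Y).hom ≫ S.addHom RX.hom RY.hom ≫ (S.gl S.zero).hom)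
            (𝟙 (S.mul S.zero (S.add X Y))) ≫ S.addHom (𝟙 S.zero) RXY.hom := by
          rw [← S.addHom_comp, Category.comp_id, Category.id_comp]
      _ = S.addHom RXY.hom (𝟙 (S.mul S.zero (S.add X Y))) ≫ S.addHom (𝟙 S.zero) RXY.hom := by
          rw [h3]
      _ = S.addHom RXY.hom RXY.hom := by
          rw [← S.addHom_comp, Category.comp_id, Category.id_comp]
  have h5 : S.addHom (𝟙 (S.mul S.zero (S.add X Y))) RXY.hom
        ≫ S.addHom ((S.distL S.zero X Y).hom ≫ S.addHom RX.hom RY.hom ≫ (S.gl S.zero).hom)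
            (𝟙 S.zero)
      = S.addHom (𝟙 (S.mul S.zero (S.add X Y))) RXY.hom ≫ S.addHom RXY.hom (𝟙 S.zero) := by
    rw [← S.addHom_comp, ← S.addHom_comp]
    simp only [Category.id_comp, Category.comp_id]
    exact h4
  rwa [cancel_epi] at h5
end
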